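/- Let D be a digraph with arc-weighting w, and let u ≠ v be vertices such that for every vertex x, if x → u is an arc with w(xu) > 0 then x → v is an arc of D. Let D' with arc-weighting w' be the contraction of u to v. Then for every vertex y ∈ V ∖ {u}, the neighborhood weight difference does not increase: δ^{D'}_y ≤ δ^D_y. In particular, if every vertex of D is strongly contracting, then every vertex of D' is strongly contracting. -/

import Mathlib

open Finset

/-- The first out-neighborhood of `v`: all `u` with `v → u`. -/
def firstNbhd {V : Type*} [Fintype V] (adj : V → V → Prop) [DecidableRel adj] (v : V) :
    Finset V :=
  Finset.univ.filter (fun u => adj v u)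

/-- The second out-neighborhood of `v`: all `u ≠ v` with `¬ v → u` and `v → x → u` for some `x`. -/
def secondNbhd {V : Type*} [Fintype V] [DecidableEq V] (adj : V → V → Prop)
    [DecidableRel adj] (v : V) : Finset V :=
  Finset.univ.filter (fun u => u ≠ v ∧ ¬ adj v u ∧ ∃ x, adj v x ∧ adj x u)

/-- First neighborhood weight `α_v = Σ_{u ∈ N1+(v)} w(vu)`. -/
def alphaW {V : Type*} [Fintype V] (adj : V → V → Prop) [DecidableRel adj]
    (w : V → V → ℝ) (v : V) : ℝ :=
  ∑ u ∈ firstNbhd adj v, w v u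

/-- `β_v(s) = max({0} ∪ {w(us) − w(vs) : v → u and u → s})`. -/
noncomputable def betaS {V : Type*} [Fintype V] (adj : V → V → Prop) [DecidableRel adj]
    (w : V → V → ℝ) (v s : V) : ℝ :=
  (insert (0 : ℝ)
    ((Finset.univ.filter (fun u => adj v u ∧ adj u s)).image (fun u => w u s - w v s))).max'
    (Finset.insert_nonempty _ _)

/-- Second neighborhood weight `β_v = Σ_{s ∈ V} β_v(s)`. -/
noncomputable def betaW {V : Type*} [Fintype V] (adj : V → V → Prop) [DecidableRel adj]
    (w : V → V → ℝ) (v : V) : ℝ :=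
  ∑ s, betaS adj w v s

/-- Neighborhood weight difference `δ_v = β_v − α_v`. -/
noncomputable def deltaW {V : Type*} [Fintype V] (adj : V → V → Prop) [DecidableRel adj]
    (w : V → V → ℝ) (v : V) : ℝ :=
  betaW adj w v - alphaW adj w v

/-
Contracting `u` to `v` leaves every first neighborhood weight unchanged: an arc `y → u` of
positive weight forces `y → v`, so the weight of `y → u` is merely moved onto `y → v`.
Every second-neighborhood term `β_y(s)` with `s ≠ v` can only shrink, since the contracted
digraph is induced, and `β'_y(v) ≤ β_y(v) + β_y(u)` because each difference
`w'(av) − w'(yv)` splits into a difference at `v` and one at `u`. Summing over `s`,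
`β'_y ≤ β_y` and hence `δ'_y ≤ δ_y`.
-/

section Weights

variable {V : Type*} [Fintype V] (adj : V → V → Prop) [DecidableRel adj] (w : V → V → ℝ)

lemma betaS_nonneg (y s : V) : 0 ≤ betaS adj w y s :=
  le_max' _ 0 (mem_insert_self _ _)

variable {adj} in
lemma sub_le_betaS {y a s : V} (hya : adj y a) (has : adj a s) :
    w a s - w y s ≤ betaS adj w y s :=
  le_max' _ _ <| mem_insert_of_mem <| mem_image_of_mem (fun b => w b s - w y s) <|
    mem_filter.mpr ⟨mem_univ a, hya, has⟩

lemma betaS_le {y s : V} {c : ℝ} (hc : 0 ≤ c)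
    (h : ∀ a, adj y a → adj a s → w a s - w y s ≤ c) : betaS adj w y s ≤ c := by
  refine max'_le _ _ _ fun x hx => ?_
  rcases mem_insert.mp hx with rfl | hx
  · exact hc
  · obtain ⟨a, ha, rfl⟩ := mem_image.mp hx
    obtain ⟨-, hya, has⟩ := mem_filter.mp ha
    exact h a hya has

lemma alphaW_eq_sum {y : V} (h : ∀ b, ¬ adj y b → w y b = 0) :
    alphaW adj w y = ∑ b, w y b :=
  sum_filter_of_ne fun b _ hb => by_contra fun hyb => hb (h b hyb)

end Weights

lemma weight_into_eq_zero_of_not_adj {V : Type*} {adj : V → V → Prop} {w : V → V → ℝ}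
    (hw_nonneg : ∀ a b, 0 ≤ w a b) (hw_arc : ∀ a b, ¬ adj a b → w a b = 0) {u v : V}
    (hcontr : ∀ x, adj x u → 0 < w x u → adj x v) {a : V} (hav : ¬ adj a v) : w a u = 0 := by
  by_cases hau : adj a u
  · exact ((hw_nonneg a u).eq_of_not_lt fun hpos => hav (hcontr a hau hpos)).symm
  · exact hw_arc a u hau

section Contraction

variable {V : Type*} [Fintype V] [DecidableEq V]

def contractWeight (w : V → V → ℝ) (u v : V) (a b : {x : V // x ≠ u}) : ℝ :=
  if b.1 = v then w a.1 v + w a.1 u else w a.1 b.1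

lemma sum_subtype_ne_ite_add {u v : V} (hvu : v ≠ u) (g : V → ℝ) :
    ∑ b : {x : V // x ≠ u}, (if b.1 = v then g v + g u else g b.1) = ∑ b, g b := by
  rw [← sum_subtype (univ.erase u) (by simp) fun b => if b = v then g v + g u else g b]
  have hsplit : ∀ b ∈ univ.erase u,
      (if b = v then g v + g u else g b) = g b + if b = v then g u else 0 := by
    intro b _
    split_ifs <;> simp_all
  rw [sum_congr rfl hsplit, sum_add_distrib, sum_ite_eq' (univ.erase u) v fun _ => g u,
    if_pos (mem_erase.mpr ⟨hvu, mem_univ v⟩), sum_erase_add _ _ (mem_univ u)]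

variable (adj : V → V → Prop) [DecidableRel adj] {w : V → V → ℝ}
  (hw_arc : ∀ a b, ¬ adj a b → w a b = 0) {u v : V}
include hw_arc

lemma alphaW_contractWeight (hvu : v ≠ u) (hwu : ∀ a, ¬ adj a v → w a u = 0)
    (y : {x : V // x ≠ u}) :
    alphaW (fun a b : {x : V // x ≠ u} => adj a.1 b.1) (contractWeight w u v) y
      = alphaW adj w y.1 := by
  have hsupp : ∀ b : {x : V // x ≠ u}, ¬ adj y.1 b.1 → contractWeight w u v y b = 0 := by
    rintro b hyb
    unfold contractWeight
    split_ifs with hbv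
    · subst hbv
      rw [hw_arc _ _ hyb, hwu _ hyb, add_zero]
    · exact hw_arc _ _ hyb
  rw [alphaW_eq_sum _ _ hsupp, alphaW_eq_sum _ _ (hw_arc y.1)]
  exact sum_subtype_ne_ite_add hvu (w y.1)

lemma betaS_contractWeight_le (hw_nonneg : ∀ a b, 0 ≤ w a b) (y s : {x : V // x ≠ u}) :
    betaS (fun a b : {x : V // x ≠ u} => adj a.1 b.1) (contractWeight w u v) y s
      ≤ if s.1 = v then betaS adj w y.1 v + betaS adj w y.1 u else betaS adj w y.1 s.1 := by
  split_ifs with hsv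
  · refine betaS_le _ _ (add_nonneg (betaS_nonneg ..) (betaS_nonneg ..)) fun a hya has => ?_
    have hav : adj a.1 v := hsv ▸ has
    have hdiff_v := sub_le_betaS w hya hav
    -- without an arc `a → u` the difference at `u` is `-w(yu) ≤ 0`
    have hdiff_u : w a.1 u - w y.1 u ≤ betaS adj w y.1 u := by
      by_cases hau : adj a.1 u
      · exact sub_le_betaS w hya hau
      · rw [hw_arc _ _ hau, zero_sub]
        exact (neg_nonpos.mpr (hw_nonneg ..)).trans (betaS_nonneg ..)
    simp only [contractWeight, if_pos hsv]
    linarith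
  · refine betaS_le _ _ (betaS_nonneg ..) fun a hya has => ?_
    simp only [contractWeight, if_neg hsv]
    exact sub_le_betaS w hya has

lemma deltaW_contractWeight_le (hw_nonneg : ∀ a b, 0 ≤ w a b) (hvu : v ≠ u)
    (hwu : ∀ a, ¬ adj a v → w a u = 0) (y : {x : V // x ≠ u}) :
    deltaW (fun a b : {x : V // x ≠ u} => adj a.1 b.1) (contractWeight w u v) y
      ≤ deltaW adj w y.1 := by
  have hbeta : betaW (fun a b : {x : V // x ≠ u} => adj a.1 b.1) (contractWeight w u v) y
      ≤ betaW adj w y.1 :=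
    calc _ ≤ ∑ s : {x : V // x ≠ u}, if s.1 = v then betaS adj w y.1 v + betaS adj w y.1 u
              else betaS adj w y.1 s.1 :=
          sum_le_sum fun s _ => betaS_contractWeight_le adj hw_arc hw_nonneg y s
      _ = betaW adj w y.1 := sum_subtype_ne_ite_add hvu _
  unfold deltaW
  rw [alphaW_contractWeight adj hw_arc hvu hwu]
  exact sub_le_sub_right hbeta _

end Contraction

theorem contraction_delta_le_general
    {V : Type*} [Fintype V] [DecidableEq V]
    (adj : V → V → Prop) [DecidableRel adj]
    (w : V → V → ℝ)
    (hw_nonneg : ∀ a b, 0 ≤ w a b)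
    (hw_arc : ∀ a b, ¬ adj a b → w a b = 0)
    (u v : V) (huv : u ≠ v)
    (hcontr : ∀ x, adj x u → 0 < w x u → adj x v) :
    (∀ y : {x : V // x ≠ u},
        deltaW (fun a b : {x : V // x ≠ u} => adj a.1 b.1)
          (fun a b : {x : V // x ≠ u} =>
            if b.1 = v then w a.1 v + w a.1 u else w a.1 b.1) y
        ≤ deltaW adj w y.1)
    ∧ ((∀ z : V, deltaW adj w z < 0) →
        ∀ y : {x : V // x ≠ u},
          deltaW (fun a b : {x : V // x ≠ u} => adj a.1 b.1)
            (fun a b : {x : V // x ≠ u} =>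
              if b.1 = v then w a.1 v + w a.1 u else w a.1 b.1) y < 0) := by
  have hwu : ∀ a, ¬ adj a v → w a u = 0 := fun _ hav =>
    weight_into_eq_zero_of_not_adj hw_nonneg hw_arc hcontr hav
  have hdelta : ∀ y : {x : V // x ≠ u}, deltaW (fun a b : {x : V // x ≠ u} => adj a.1 b.1)
      (contractWeight w u v) y ≤ deltaW adj w y.1 :=
    deltaW_contractWeight_le adj hw_arc hw_nonneg huv.symm hwu
  exact ⟨hdelta, fun hneg y => (hdelta y).trans_lt (hneg y.1)⟩

/-- **Contraction does not increase neighborhood weight differences.**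
Let `u ≠ v` be vertices of an arc-weighted digraph such that every positive-weight arc
into `u` comes from an in-neighbor of `v`.  The contraction of `u` to `v` is the digraph
induced on `V ∖ {u}` whose weighting adds the weight of each arc `x → u` to `x → v`.
Then `δ^{D'}_y ≤ δ^D_y` for every remaining vertex `y`; in particular, if every vertex
of `D` is strongly contracting, then every vertex of `D'` is strongly contracting. -/
theorem contraction_delta_le
    {V : Type*} [Fintype V] [DecidableEq V]
    (adj : V → V → Prop) [DecidableRel adj]
    (hirr : ∀ a, ¬ adj a a)
    (hasym : ∀ a b, adj a b → ¬ adj b a)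
    (w : V → V → ℝ)
    (hw_nonneg : ∀ a b, 0 ≤ w a b)
    (hw_arc : ∀ a b, ¬ adj a b → w a b = 0)
    (u v : V) (huv : u ≠ v)
    (hcontr : ∀ x, adj x u → 0 < w x u → adj x v) :
    (∀ y : {x : V // x ≠ u},
        deltaW (fun a b : {x : V // x ≠ u} => adj a.1 b.1)
          (fun a b : {x : V // x ≠ u} =>
            if b.1 = v then w a.1 v + w a.1 u else w a.1 b.1) y
        ≤ deltaW adj w y.1)
    ∧ ((∀ z : V, deltaW adj w z < 0) →
        ∀ y : {x : V // x ≠ u},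
          deltaW (fun a b : {x : V // x ≠ u} => adj a.1 b.1)
            (fun a b : {x : V // x ≠ u} =>
              if b.1 = v then w a.1 v + w a.1 u else w a.1 b.1) y < 0) :=
  contraction_delta_le_general adj w hw_nonneg hw_arc u v huv hcontr
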